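/- Let n be odd, k ≥ 3, and let f : 𝔽₂ⁿ → ℤ_{2^k}, f(x) = a₀(x) + 2a₁(x) + ⋯ + 2^{k−1}a_{k−1}(x), be a gbent function. Then its generalized Gray map ψ(f) : 𝔽₂ⁿ × 𝔽₂^{k−1} → 𝔽₂, ψ(f)(x, y₀,…,y_{k−2}) = ⊕_{i=0}^{k−2} aᵢ(x)yᵢ ⊕ a_{k−1}(x), is a (k−2)-plateaued Boolean function in n+k−1 variables; that is, W_{ψ(f)}(u, y) ∈ {0, 2^{(n+1)/2+k−2}, −2^{(n+1)/2+k−2}} for all (u, y) ∈ 𝔽₂ⁿ × 𝔽₂^{k−1}. -/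

import Mathlib

open Finset

/-- Boolean functions on `𝔽₂ⁿ`. -/
abbrev BF (n : ℕ) := (Fin n → ZMod 2) → ZMod 2

/-- Dot product on `𝔽₂ⁿ`. -/
def bdot {n : ℕ} (u x : Fin n → ZMod 2) : ZMod 2 := ∑ i, u i * x i

/-- Walsh–Hadamard transform of a Boolean function. -/
def walsh {n : ℕ} (g : BF n) (u : Fin n → ZMod 2) : ℤ :=
  ∑ x : Fin n → ZMod 2, (-1 : ℤ) ^ (g x + bdot u x).val

/-- Generalized Walsh–Hadamard transform of `f : 𝔽₂ⁿ → ℤ_q`. -/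
noncomputable def gwht {n q : ℕ} (f : (Fin n → ZMod 2) → ZMod q) (u : Fin n → ZMod 2) : ℂ :=
  ∑ x : Fin n → ZMod 2,
    Complex.exp (2 * Real.pi * Complex.I / (q : ℂ)) ^ (f x).val * (-1 : ℂ) ^ (bdot u x).val

/-- `f : 𝔽₂ⁿ → ℤ_q` is gbent if `|H_f(u)| = 2^{n/2}` for all `u`. -/
def IsGbent {n q : ℕ} (f : (Fin n → ZMod 2) → ZMod q) : Prop :=
  ∀ u, ‖gwht f u‖ = (2 : ℝ) ^ ((n : ℝ) / 2)

/-- A Boolean function (in an even number `n` of variables) is bent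
if `|W_g(u)| = 2^{n/2}` for all `u`. -/
def IsBent {n : ℕ} (g : BF n) : Prop := ∀ u, |walsh g u| = 2 ^ (n / 2)

/-- A Boolean function (in an odd number `n` of variables) is semi-bent if
`W_g(u) ∈ {0, ±2^{(n+1)/2}}` for all `u`. -/
def IsSemiBent {n : ℕ} (g : BF n) : Prop :=
  ∀ u, walsh g u = 0 ∨ walsh g u = 2 ^ ((n + 1) / 2) ∨ walsh g u = -2 ^ ((n + 1) / 2)

/-- `gd` is the dual of the bent function `g`: `W_g(u) = 2^{n/2}(-1)^{gd(u)}`. -/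
def IsDual {n : ℕ} (g gd : BF n) : Prop :=
  ∀ u, walsh g u = 2 ^ (n / 2) * (-1 : ℤ) ^ (gd u).val

/-- The `t`-th binary digit of `j`, as an element of `𝔽₂`. -/
def bit (t j : ℕ) : ZMod 2 := if Nat.testBit j t then 1 else 0

/-- Dot product `z_r · z_j` of the binary representations (of length `m`) of `r` and `j`. -/
def zdot (m r j : ℕ) : ZMod 2 := ∑ t ∈ Finset.range m, bit t r * bit t j

/-- Entry `(r, j)` of the Sylvester–Hadamard matrix `H_{2^m}`, i.e. `(-1)^{z_r · z_j}`. -/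
def hadRow (m r j : ℕ) : ℤ := (-1 : ℤ) ^ (zdot m r j).val

/-- `a 0, …, a (k-1)` are the Boolean coordinate functions of `f : 𝔽₂ⁿ → ℤ_{2^k}`:
`f = a₀ + 2a₁ + ⋯ + 2^{k-1}a_{k-1}`. -/
def coordExpand {n : ℕ} (k : ℕ) (a : ℕ → BF n) (f : (Fin n → ZMod 2) → ZMod (2 ^ k)) : Prop :=
  ∀ x, f x = ∑ j ∈ Finset.range k, (2 : ZMod (2 ^ k)) ^ j * ((a j x).val : ZMod (2 ^ k))

/-- The `i`-th component function `g_i = a_{k-1} ⊕ i₀a₀ ⊕ ⋯ ⊕ i_{k-2}a_{k-2}`. -/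
def component {n : ℕ} (k : ℕ) (a : ℕ → BF n) (i : ℕ) : BF n :=
  fun x => a (k - 1) x + ∑ t ∈ Finset.range (k - 1), bit t i * a t x

/-- The affine space `a0 ⊕ ⟨a 0, …, a (m-1)⟩` of Boolean functions. -/
def affSpan {n : ℕ} (m : ℕ) (a0 : BF n) (a : ℕ → BF n) : Set (BF n) :=
  {g | ∃ c : ℕ → ZMod 2, g = fun x => a0 x + ∑ t ∈ Finset.range m, c t * a t x}

/-- Walsh–Hadamard transform for Boolean functions on `𝔽₂ⁿ × 𝔽₂^m`. -/
def walshP {n m : ℕ} (F : (Fin n → ZMod 2) → (Fin m → ZMod 2) → ZMod 2)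
    (u : Fin n → ZMod 2) (v : Fin m → ZMod 2) : ℤ :=
  ∑ x : Fin n → ZMod 2, ∑ y : Fin m → ZMod 2, (-1 : ℤ) ^ (F x y + bdot u x + bdot v y).val

/-!
Summing over `y` first gives `W_{ψ(f)}(u, y) = 2^(k-1) T_u(y)`, where `T_u(v)` is the Walsh sum of
`a_{k-1}` over the fibre `{x | (a_0, …, a_{k-2})(x) = v}`. Grouping `H_f(u)` along the same fibres
gives `H_f(u) = ∑_v T_u(v) ζ^(v_0 + 2 v_1 + ⋯)` with `ζ` a primitive `2^k`-th root of unity, so the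
`T_u(v)` are the coordinates of `H_f(u)` in the basis `1, ζ, …, ζ^(2^(k-1) - 1)` of
`ℤ[ζ] ≅ ℤ[X]/(X^(2^(k-1)) + 1)`, and `H_f(u)` has norm `H_f(u) H_f(u)‾ = 2^n`.

In `ℤ[ζ]`, `2 = (1 - i)(1 + i)` with `i = ζ^(2^(k-2))`, and a reduction mod 2 shows that for
`z ∈ ℤ[ζ]`, `2 ∣ z z̄` forces `(1 - i) ∣ z`. Descending, `z z̄ = 2^n` gives `z = (1 - i)^n β` with `β β̄ = 1`; for
`n = 2w + 1` this is `z = 2^w β'` with `β' β̄' = 2`. The constant coordinate of `β' β̄'` is the sum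
of the squares of the coordinates of `β'`, so these all lie in `{0, ±1}`.
-/

open Polynomial

theorem IsPrimitiveRoot.pow_two_pow_eq_neg_one {R : Type*} [CommRing R] [IsDomain R] {ζ : R}
    {s : ℕ} (hζ : IsPrimitiveRoot ζ (2 ^ (s + 1))) : ζ ^ 2 ^ s = -1 := by
  have h := hζ.pow_of_dvd (p := 2 ^ s) (by positivity) (pow_dvd_pow 2 s.le_succ)
  rw [pow_succ, Nat.mul_div_cancel_left _ (by positivity)] at h
  exact h.eq_neg_one_of_two_right

namespace Polynomial

theorem X_sub_one_pow_dvd_of_dvd_mul_comp_X_pow {R : Type*} [CommRing R] [IsDomain R] {e c : ℕ}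
    (he : (e : R) ≠ 0) {g : R[X]} (h : (X - 1) ^ (2 * c) ∣ g * g.comp (X ^ e)) :
    (X - 1) ^ c ∣ g := by
  rcases eq_or_ne g 0 with rfl | hg
  · exact dvd_zero _
  obtain ⟨q, hgq, hq⟩ := exists_eq_pow_rootMultiplicity_mul_and_not_dvd g hg 1
  set r := rootMultiplicity 1 g
  rw [C_1] at hgq hq
  set s := q * ((∑ i ∈ range e, X ^ i) ^ r * q.comp (X ^ e))
  have hprod : g * g.comp (X ^ e) = (X - 1) ^ (2 * r) * s := by
    rw [hgq, mul_comp, pow_comp, sub_comp, X_comp, one_comp, ← mul_geom_sum, mul_pow]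
    ring
  have hs : ¬ (X - 1) ∣ s := by
    rw [← C_1, dvd_iff_isRoot, IsRoot.def] at hq ⊢
    simp [s, eval_geom_sum, he, hq]
  refine (pow_dvd_pow _ ?_).trans (hgq ▸ dvd_mul_right _ _)
  by_contra! hlt
  have h' : (X - 1) ^ (2 * r) * (X - 1) ∣ (X - 1) ^ (2 * r) * s := by
    rw [← pow_succ, ← hprod]; exact (pow_dvd_pow _ (by omega)).trans h
  exact hs ((mul_dvd_mul_iff_left (pow_ne_zero _ (X_sub_C_ne_zero 1))).1 h')

theorem two_dvd_of_map_eq_zero {q : ℤ[X]} (h : q.map (Int.castRingHom (ZMod 2)) = 0) :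
    (2 : ℤ[X]) ∣ q := by
  rw [show (2 : ℤ[X]) = C 2 from rfl, C_dvd_iff_dvd_coeff]
  intro i
  have := congrArg (coeff · i) h
  exact (ZMod.intCast_zmod_eq_zero_iff_dvd _ 2).1 (by simpa using this)

end Polynomial

/-- For `m = 2^(κ+1)` this is `ℤ[ζ]` for a primitive `2m`-th root of unity `ζ`, and `conj` below
is complex conjugation `θ ↦ θ⁻¹ = -θ^(m-1)`. -/
abbrev NegacyclicRing (m : ℕ) : Type := AdjoinRoot (X ^ m + 1 : ℤ[X])

namespace NegacyclicRing

section

variable {m : ℕ} [NeZero m]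

local notation "θ" => AdjoinRoot.root (X ^ m + 1 : ℤ[X])

omit [NeZero m] in
theorem root_pow_eq_neg_one : θ ^ m = -1 := by
  have h := AdjoinRoot.mk_self (f := (X ^ m + 1 : ℤ[X]))
  rw [map_add, map_pow, AdjoinRoot.mk_X, map_one] at h
  linear_combination h

theorem monic_X_pow_add_one : (X ^ m + 1 : ℤ[X]).Monic := by
  simpa using monic_X_pow_add_C (1 : ℤ) (NeZero.ne m)

theorem neg_root_pow_pred_pow : (-θ ^ (m - 1)) ^ m = -1 := by
  have hodd : Odd (m + (m - 1)) := ⟨m - 1, by have := NeZero.ne m; omega⟩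
  rw [neg_pow, ← pow_mul, mul_comm (m - 1), pow_mul, root_pow_eq_neg_one, ← pow_add, add_comm,
    hodd.neg_one_pow]

noncomputable def conj : NegacyclicRing m →ₐ[ℤ] NegacyclicRing m :=
  AdjoinRoot.liftAlgHom _ (Algebra.ofId ℤ _) (-θ ^ (m - 1)) <| by
    simp only [eval₂_add, eval₂_pow, eval₂_X, eval₂_one, neg_root_pow_pred_pow, neg_add_cancel]

theorem conj_mk (p : ℤ[X]) : conj (AdjoinRoot.mk _ p) = aeval (-θ ^ (m - 1)) p := rfl

theorem conj_root : conj θ = -θ ^ (m - 1) := AdjoinRoot.liftAlgHom_root _ _ _ _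

theorem root_pow_mul_conj (d : ℕ) : θ ^ d * conj (θ ^ d) = 1 := by
  have h : θ * conj θ = 1 := by
    rw [conj_root, mul_neg, ← pow_succ', Nat.sub_add_cancel (NeZero.one_le), root_pow_eq_neg_one,
      neg_neg]
  rw [map_pow, ← mul_pow, h, one_pow]

theorem conj_root_pow {d : ℕ} (hd : d ≤ m) : conj (θ ^ d) = -θ ^ (m - d) := by
  have h : θ ^ d * -θ ^ (m - d) = 1 := by
    rw [mul_neg, ← pow_add, Nat.add_sub_cancel' hd, root_pow_eq_neg_one, neg_neg]
  calc conj (θ ^ d) = conj (θ ^ d) * (θ ^ d * -θ ^ (m - d)) := by rw [h, mul_one]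
    _ = -θ ^ (m - d) := by rw [← mul_assoc, mul_comm (conj _), root_pow_mul_conj, one_mul]

/-- Coordinates in the `ℤ`-basis `1, θ, …, θ^(m-1)`. -/
noncomputable def coord (i : ℕ) : NegacyclicRing m →ₗ[ℤ] ℤ :=
  (lcoeff ℤ i).comp (AdjoinRoot.modByMonicHom monic_X_pow_add_one)

theorem coord_root_pow (i : ℕ) {j : ℕ} (hj : j < m) :
    coord i (θ ^ j) = if i = j then 1 else 0 := by
  have hdeg : (X ^ j : ℤ[X]).degree < (X ^ m + 1 : ℤ[X]).degree := by
    rw [degree_X_pow, ← C_1, degree_X_pow_add_C (NeZero.pos m)]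
    exact_mod_cast hj
  rw [coord, LinearMap.comp_apply, ← AdjoinRoot.mk_X, ← map_pow,
    AdjoinRoot.modByMonicHom_mk, (modByMonic_eq_self_iff monic_X_pow_add_one).2 hdeg, lcoeff_apply,
    coeff_X_pow]

theorem sum_coord_smul_root_pow (α : NegacyclicRing m) :
    ∑ i ∈ range m, coord i α • θ ^ i = α := by
  obtain ⟨p, rfl⟩ := AdjoinRoot.mk_surjective α
  have hdeg : (p %ₘ (X ^ m + 1)).natDegree < m := by
    have hnat : (X ^ m + 1 : ℤ[X]).natDegree = m := by rw [← C_1, natDegree_X_pow_add_C]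
    have h1 : (X ^ m + 1 : ℤ[X]) ≠ 1 := fun h =>
      NeZero.ne m (by rw [← hnat, h, natDegree_one])
    exact (natDegree_modByMonic_lt p monic_X_pow_add_one h1).trans_eq hnat
  simp only [coord, LinearMap.comp_apply, AdjoinRoot.modByMonicHom_mk, lcoeff_apply]
  rw [← aeval_eq_sum_range' hdeg, AdjoinRoot.aeval_eq, AdjoinRoot.mk_eq_mk]
  exact ⟨-(p /ₘ (X ^ m + 1)), by linear_combination modByMonic_add_div p (X ^ m + 1)⟩

theorem coord_sum_smul_root_pow (t : Fin m → ℤ) (i : Fin m) :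
    coord i (∑ j : Fin m, t j • θ ^ (j : ℕ)) = t i := by
  simp only [map_sum, map_zsmul, coord_root_pow _ (Fin.is_lt _), Fin.val_inj, smul_eq_mul,
    mul_ite, mul_one, mul_zero, sum_ite_eq, mem_univ, if_true]

theorem coord_zero_intCast (n : ℤ) : coord 0 (n : NegacyclicRing m) = n := by
  have h := map_zsmul (coord (m := m) 0) n (θ ^ 0)
  rwa [coord_root_pow 0 (NeZero.pos m), if_pos rfl, pow_zero, zsmul_one, smul_eq_mul,
    mul_one] at h

theorem coord_zero_root_pow_mul_conj {i j : ℕ} (hi : i < m) (hj : j < m) :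
    coord 0 (θ ^ i * conj (θ ^ j)) = if i = j then 1 else 0 := by
  rw [conj_root_pow hj.le, mul_neg, ← pow_add]
  rcases le_or_gt j i with hji | hij
  · rw [show i + (m - j) = m + (i - j) by omega, pow_add, root_pow_eq_neg_one, neg_one_mul,
      neg_neg, coord_root_pow 0 (by omega)]
    exact if_congr (by omega) rfl rfl
  · rw [map_neg, coord_root_pow 0 (by omega), if_neg (by omega), if_neg (by omega), neg_zero]

theorem coord_zero_mul_conj (α : NegacyclicRing m) :
    coord 0 (α * conj α) = ∑ i ∈ range m, coord i α ^ 2 := by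
  conv_lhs => rw [← sum_coord_smul_root_pow α]
  simp only [map_sum, map_zsmul, sum_mul_sum, smul_mul_smul_comm, smul_eq_mul]
  refine sum_congr rfl fun i hi => ?_
  rw [sum_congr rfl fun j hj => by
    rw [coord_zero_root_pow_mul_conj (mem_range.1 hi) (mem_range.1 hj), mul_ite, mul_one,
      mul_zero], sum_ite_eq, if_pos hi, sq]

theorem eq_of_two_mul_eq_two_mul {α β : NegacyclicRing m} (h : 2 * α = 2 * β) : α = β := by
  have h2 : (2 : ℤ) • α = (2 : ℤ) • β := by rwa [two_smul, two_smul, ← two_mul, ← two_mul]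
  apply (AdjoinRoot.mk_leftInverse (monic_X_pow_add_one (m := m))).injective
  have := congrArg (AdjoinRoot.modByMonicHom (monic_X_pow_add_one (m := m))) h2
  rw [map_smul, map_smul] at this
  exact smul_right_injective _ two_ne_zero this

end

section PowerOfTwo

variable {κ : ℕ}

local notation "θ" => AdjoinRoot.root (X ^ 2 ^ (κ + 1) + 1 : ℤ[X])
local notation "mk" => AdjoinRoot.mk (X ^ 2 ^ (κ + 1) + 1 : ℤ[X])

theorem conj_root_pow_half : conj (θ ^ 2 ^ κ) = -θ ^ 2 ^ κ := by
  rw [conj_root_pow (Nat.pow_le_pow_right two_pos κ.le_succ), pow_succ, Nat.mul_two,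
    Nat.add_sub_cancel]

theorem root_pow_half_sq : (θ ^ 2 ^ κ) ^ 2 = -1 := by
  rw [← pow_mul, ← pow_succ]
  exact root_pow_eq_neg_one

theorem one_sub_root_pow_mul_conj : (1 - θ ^ 2 ^ κ) * conj (1 - θ ^ 2 ^ κ) = 2 := by
  rw [map_sub, map_one, conj_root_pow_half]
  linear_combination -root_pow_half_sq (κ := κ)

theorem one_sub_root_pow_sq : (1 - θ ^ 2 ^ κ) ^ 2 = 2 * -θ ^ 2 ^ κ := by
  linear_combination root_pow_half_sq (κ := κ)

/-- Modulo 2, `X^m + 1 = (X - 1)^m` and `conj` becomes `p ↦ p(X^(m-1))`, which preserves the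
multiplicity of the root `1`; hence `(X - 1)^(m/2) = X^(m/2) + 1` divides `α` modulo 2, and
`θ^(m/2) + 1 = θ^(m/2) (1 - θ^(m/2))`. -/
theorem one_sub_root_pow_dvd_of_two_dvd_mul_conj {α : NegacyclicRing (2 ^ (κ + 1))}
    (h : 2 ∣ α * conj α) : 1 - θ ^ 2 ^ κ ∣ α := by
  obtain ⟨p, rfl⟩ := AdjoinRoot.mk_surjective α
  obtain ⟨γ, hγ⟩ := h
  obtain ⟨r, rfl⟩ := AdjoinRoot.mk_surjective γ
  have hconj : conj (mk p) = mk (p.comp (-X ^ (2 ^ (κ + 1) - 1))) := by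
    rw [conj_mk, ← AdjoinRoot.aeval_eq, aeval_comp]; simp
  rw [hconj, ← map_mul, show (2 : NegacyclicRing (2 ^ (κ + 1))) = mk 2 from rfl, ← map_mul,
    AdjoinRoot.mk_eq_mk] at hγ
  have hfrob : ∀ j, ((X : (ZMod 2)[X]) - 1) ^ 2 ^ j = X ^ 2 ^ j + 1 := fun j => by
    rw [sub_pow_char_pow, one_pow, CharTwo.sub_eq_add]
  have hred : (X - 1) ^ (2 * 2 ^ κ) ∣
      p.map (Int.castRingHom (ZMod 2)) * (p.map (Int.castRingHom (ZMod 2))).comp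
        (X ^ (2 ^ (κ + 1) - 1)) := by
    rw [← pow_succ', hfrob]
    simpa [Polynomial.map_comp, CharTwo.neg_eq, CharTwo.two_eq_zero] using
      map_dvd (mapRingHom (Int.castRingHom (ZMod 2))) hγ
  have hodd : ((2 ^ (κ + 1) - 1 : ℕ) : ZMod 2) ≠ 0 := by
    rw [Ne, ZMod.natCast_eq_zero_iff_even, Nat.not_even_iff_odd]
    exact Nat.Even.sub_odd (Nat.one_le_two_pow) (Nat.even_pow.2 ⟨even_two, by omega⟩) odd_one
  obtain ⟨g', hg'⟩ := X_sub_one_pow_dvd_of_dvd_mul_comp_X_pow hodd hred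
  rw [hfrob] at hg'
  obtain ⟨g, rfl⟩ := map_surjective (Int.castRingHom (ZMod 2)) ZMod.intCast_surjective g'
  obtain ⟨s, hs⟩ := two_dvd_of_map_eq_zero (q := p - (X ^ 2 ^ κ + 1) * g) (by simp [hg'])
  have hp : p = (X ^ 2 ^ κ + 1) * g + 2 * s := by linear_combination hs
  rw [hp, map_add, map_mul, map_mul, map_add, map_pow, AdjoinRoot.mk_X, map_one, map_ofNat]
  refine dvd_add (dvd_mul_of_dvd_left ⟨θ ^ 2 ^ κ, ?_⟩ _) (dvd_mul_of_dvd_left ?_ _)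
  · linear_combination root_pow_half_sq (κ := κ)
  · exact ⟨_, one_sub_root_pow_mul_conj.symm⟩

theorem exists_eq_one_sub_root_pow_pow_mul_of_mul_conj_eq (N : ℕ)
    {α : NegacyclicRing (2 ^ (κ + 1))} (h : α * conj α = 2 ^ N) :
    ∃ β, α = (1 - θ ^ 2 ^ κ) ^ N * β ∧ β * conj β = 1 := by
  induction N generalizing α with
  | zero => exact ⟨α, by rw [pow_zero, one_mul], by rw [h, pow_zero]⟩
  | succ N ih =>
    obtain ⟨γ, rfl⟩ :=
      one_sub_root_pow_dvd_of_two_dvd_mul_conj ⟨2 ^ N, by rw [h, pow_succ' (2 : NegacyclicRing _)]⟩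
    have hγ : γ * conj γ = 2 ^ N := by
      refine eq_of_two_mul_eq_two_mul ?_
      rw [← pow_succ', ← h, ← one_sub_root_pow_mul_conj, map_mul]
      ring
    obtain ⟨β, rfl, hβ⟩ := ih hγ
    exact ⟨β, by ring, hβ⟩

theorem coord_eq_zero_or_of_mul_conj_eq_two_pow_odd {w : ℕ}
    {α : NegacyclicRing (2 ^ (κ + 1))} (h : α * conj α = 2 ^ (2 * w + 1)) {i : ℕ}
    (hi : i < 2 ^ (κ + 1)) :
    coord i α = 0 ∨ coord i α = 2 ^ w ∨ coord i α = -2 ^ w := by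
  obtain ⟨β, rfl, hβ⟩ := exists_eq_one_sub_root_pow_pow_mul_of_mul_conj_eq _ h
  have hα : (1 - θ ^ 2 ^ κ) ^ (2 * w + 1) * β =
      (2 : ℤ) ^ w • ((-θ ^ 2 ^ κ) ^ w * (1 - θ ^ 2 ^ κ) * β) := by
    rw [pow_succ (1 - θ ^ 2 ^ κ), pow_mul (1 - θ ^ 2 ^ κ), one_sub_root_pow_sq, mul_pow,
      zsmul_eq_mul]
    push_cast
    ring
  set β' := (-θ ^ 2 ^ κ) ^ w * (1 - θ ^ 2 ^ κ) * β
  have hβ' : β' * conj β' = 2 := by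
    have hunit : -θ ^ 2 ^ κ * conj (-θ ^ 2 ^ κ) = 1 := by
      rw [map_neg, neg_mul_neg, root_pow_mul_conj]
    calc β' * conj β'
        = (-θ ^ 2 ^ κ * conj (-θ ^ 2 ^ κ)) ^ w * ((1 - θ ^ 2 ^ κ) * conj (1 - θ ^ 2 ^ κ)) *
            (β * conj β) := by simp only [β', map_mul, map_pow]; ring
      _ = 2 := by rw [hunit, one_sub_root_pow_mul_conj, hβ, one_pow, one_mul, mul_one]
  have hsum : ∑ j ∈ range (2 ^ (κ + 1)), coord j β' ^ 2 = 2 := by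
    rw [← coord_zero_mul_conj, hβ']
    exact_mod_cast coord_zero_intCast 2
  have hle : coord i β' ^ 2 ≤ 2 :=
    hsum ▸ single_le_sum (fun j _ => sq_nonneg (coord j β')) (mem_range.2 hi)
  have hb : -1 ≤ coord i β' ∧ coord i β' ≤ 1 := by constructor <;> nlinarith
  rw [hα, map_zsmul, smul_eq_mul]
  rcases (by omega : coord i β' = 0 ∨ coord i β' = 1 ∨ coord i β' = -1) with hc | hc | hc <;>
    simp [hc]

end PowerOfTwo

section Complex

variable {κ : ℕ} {ζ : ℂ}

local notation "θ" => AdjoinRoot.root (X ^ 2 ^ (κ + 1) + 1 : ℤ[X])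

noncomputable def toComplex (hζ : IsPrimitiveRoot ζ (2 ^ (κ + 2))) :
    NegacyclicRing (2 ^ (κ + 1)) →ₐ[ℤ] ℂ :=
  AdjoinRoot.liftAlgHom _ (Algebra.ofId ℤ ℂ) ζ (by simp [hζ.pow_two_pow_eq_neg_one])

variable (hζ : IsPrimitiveRoot ζ (2 ^ (κ + 2)))

theorem toComplex_root : toComplex hζ θ = ζ := AdjoinRoot.liftAlgHom_root _ _ _ _

theorem toComplex_injective : Function.Injective (toComplex hζ) := by
  rw [injective_iff_map_eq_zero]
  intro α hα
  obtain ⟨p, rfl⟩ := AdjoinRoot.mk_surjective α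
  have h := minpoly.isIntegrallyClosed_dvd (hζ.isIntegral (by positivity)) (p := p) hα
  rw [← cyclotomic_eq_minpoly hζ (by positivity), cyclotomic_prime_pow_eq_geom_sum Nat.prime_two]
    at h
  simpa [sum_range_succ, add_comm] using h

theorem toComplex_conj (α : NegacyclicRing (2 ^ (κ + 1))) :
    toComplex hζ (conj α) = starRingEnd ℂ (toComplex hζ α) := by
  have hinv : -ζ ^ (2 ^ (κ + 1) - 1) = ζ⁻¹ := by
    refine eq_inv_of_mul_eq_one_right ?_
    rw [mul_neg, ← pow_succ', Nat.sub_add_cancel Nat.one_le_two_pow, hζ.pow_two_pow_eq_neg_one,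
      neg_neg]
  have h : (toComplex hζ).comp conj = (starRingEnd ℂ).toIntAlgHom.comp (toComplex hζ) := by
    apply AdjoinRoot.algHom_ext
    simp [conj_root, toComplex_root, hinv, Complex.inv_eq_conj (hζ.norm'_eq_one (by positivity))]
  exact DFunLike.congr_fun h α

end Complex

end NegacyclicRing

open NegacyclicRing in
theorem coeff_eq_zero_or_of_norm_sq_eq_two_pow_odd {m : ℕ} (κ : ℕ) (hm : m = 2 ^ (κ + 1))
    {ζ : ℂ} (hζ : IsPrimitiveRoot ζ (2 * m)) (t : Fin m → ℤ) {w : ℕ}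
    (h : ‖∑ i, (t i : ℂ) * ζ ^ (i : ℕ)‖ ^ 2 = 2 ^ (2 * w + 1)) (i : Fin m) :
    t i = 0 ∨ t i = 2 ^ w ∨ t i = -2 ^ w := by
  subst hm
  rw [← pow_succ'] at hζ
  set α : NegacyclicRing (2 ^ (κ + 1)) := ∑ j, t j • AdjoinRoot.root _ ^ (j : ℕ)
  have hα : toComplex hζ α = ∑ j, (t j : ℂ) * ζ ^ (j : ℕ) := by simp [α, toComplex_root]
  have hαα : α * conj α = 2 ^ (2 * w + 1) := by
    apply toComplex_injective hζ
    rw [map_mul, toComplex_conj, hα, Complex.mul_conj, Complex.normSq_eq_norm_sq, h, map_pow,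
      map_ofNat]
    norm_cast
  rw [← coord_sum_smul_root_pow t i]
  exact coord_eq_zero_or_of_mul_conj_eq_two_pow_odd hαα i.is_lt

theorem ZMod.neg_one_pow_val_add {R : Type*} [Ring R] (a b : ZMod 2) :
    (-1 : R) ^ (a + b).val = (-1) ^ a.val * (-1) ^ b.val := by
  rw [ZMod.val_add, ← neg_one_pow_eq_pow_mod_two, pow_add]

theorem ZMod.neg_one_pow_val_sum {R : Type*} [CommRing R] {ι : Type*} (s : Finset ι)
    (c : ι → ZMod 2) : (-1 : R) ^ (∑ i ∈ s, c i).val = ∏ i ∈ s, (-1) ^ (c i).val := by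
  classical
  induction s using Finset.induction_on with
  | empty => simp
  | insert j s hj ih => rw [sum_insert hj, prod_insert hj, ZMod.neg_one_pow_val_add, ih]

theorem sum_neg_one_pow_bdot {s : ℕ} (b : Fin s → ZMod 2) :
    ∑ z : Fin s → ZMod 2, (-1 : ℤ) ^ (bdot b z).val = if b = 0 then 2 ^ s else 0 := by
  have h2 : ∀ c : ZMod 2, ∑ z : ZMod 2, (-1 : ℤ) ^ (c * z).val = if c = 0 then 2 else 0 := by
    decide
  simp only [bdot, ZMod.neg_one_pow_val_sum]
  rw [← Fintype.prod_sum (fun i z => (-1 : ℤ) ^ (b i * z).val)]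
  simp only [h2, prod_ite_zero, prod_const, card_univ, Fintype.card_fin]
  simp [funext_iff]

def restrictedWalsh {n s : ℕ} (b : (Fin n → ZMod 2) → Fin s → ZMod 2) (c : BF n)
    (u : Fin n → ZMod 2) (v : Fin s → ZMod 2) : ℤ :=
  ∑ x with b x = v, (-1 : ℤ) ^ (c x + bdot u x).val

theorem walshP_eq_two_pow_mul_restrictedWalsh {n s : ℕ} (b : (Fin n → ZMod 2) → Fin s → ZMod 2)
    (c : BF n) (u : Fin n → ZMod 2) (y : Fin s → ZMod 2) :
    walshP (fun x y => (∑ i, b x i * y i) + c x) u y = 2 ^ s * restrictedWalsh b c u y := by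
  have hsplit : ∀ x z, (∑ i, b x i * z i) + c x + bdot u x + bdot y z =
      (c x + bdot u x) + bdot (b x + y) z := fun x z => by
    simp only [bdot, Pi.add_apply, add_mul, sum_add_distrib]; ring
  have hzero : ∀ x, b x + y = 0 ↔ b x = y := fun x => by
    rw [add_eq_zero_iff_eq_neg, ZModModule.neg_eq_self]
  unfold walshP restrictedWalsh
  rw [mul_sum, sum_filter]
  refine sum_congr rfl fun x _ => ?_
  simp only [hsplit, ZMod.neg_one_pow_val_add (c x + bdot u x), ← mul_sum, sum_neg_one_pow_bdot,
    hzero]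
  split_ifs <;> ring

def binaryIndex (s : ℕ) : (Fin s → ZMod 2) ≃ Fin (2 ^ s) := finFunctionFinEquiv

theorem binaryIndex_apply_val {s : ℕ} (v : Fin s → ZMod 2) :
    (binaryIndex s v : ℕ) = ∑ i, (v i).val * 2 ^ (i : ℕ) :=
  finFunctionFinEquiv_apply v

theorem gwht_eq_sum_restrictedWalsh {n k : ℕ} (hk : 1 ≤ k) {a : ℕ → BF n}
    {f : (Fin n → ZMod 2) → ZMod (2 ^ k)} (hf : coordExpand k a f) (u : Fin n → ZMod 2) :
    gwht f u = ∑ v : Fin (k - 1) → ZMod 2,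
      (restrictedWalsh (fun x i => a i.val x) (a (k - 1)) u v : ℂ) *
        Complex.exp (2 * Real.pi * Complex.I / ((2 ^ k : ℕ) : ℂ)) ^
          (binaryIndex (k - 1) v : ℕ) := by
  set ζ := Complex.exp (2 * Real.pi * Complex.I / ((2 ^ k : ℕ) : ℂ))
  set b : (Fin n → ZMod 2) → Fin (k - 1) → ZMod 2 := fun x i => a i.val x
  have hζ : IsPrimitiveRoot ζ (2 ^ k) := Complex.isPrimitiveRoot_exp _ (by positivity)
  have hk' : k - 1 + 1 = k := Nat.sub_add_cancel hk
  have hhalf : ζ ^ 2 ^ (k - 1) = -1 := (hk' ▸ hζ).pow_two_pow_eq_neg_one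
  have hmod : ∀ N, ζ ^ (N % 2 ^ k) = ζ ^ N := fun N => by rw [hζ.eq_orderOf, pow_mod_orderOf]
  have hpow : ∀ x,
      ζ ^ (f x).val = ζ ^ (binaryIndex (k - 1) (b x) : ℕ) * (-1) ^ (a (k - 1) x).val := by
    intro x
    have hfx : f x = ((∑ j ∈ range k, 2 ^ j * (a j x).val : ℕ) : ZMod (2 ^ k)) := by
      rw [hf x]; push_cast; rfl
    have hN : ∑ j ∈ range k, 2 ^ j * (a j x).val =
        (binaryIndex (k - 1) (b x) : ℕ) + 2 ^ (k - 1) * (a (k - 1) x).val := by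
      rw [binaryIndex_apply_val, Fin.sum_univ_eq_sum_range (fun j => (a j x).val * 2 ^ j)]
      conv_lhs => rw [← hk', sum_range_succ]
      exact congrArg (· + _) (sum_congr rfl fun j _ => mul_comm _ _)
    rw [hfx, ZMod.val_natCast, hmod, hN, pow_add, pow_mul, hhalf]
  rw [gwht, ← sum_fiberwise univ b]
  refine sum_congr rfl fun v _ => ?_
  rw [restrictedWalsh, Int.cast_sum, sum_mul]
  refine sum_congr rfl fun x hx => ?_
  rw [hpow, (mem_filter.1 hx).2, ZMod.neg_one_pow_val_add]
  push_cast
  ring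

theorem restrictedWalsh_eq_zero_or_of_isGbent {w k : ℕ} (hk : 2 ≤ k) {a : ℕ → BF (2 * w + 1)}
    {f : (Fin (2 * w + 1) → ZMod 2) → ZMod (2 ^ k)} (hf : coordExpand k a f) (hgb : IsGbent f)
    (u : Fin (2 * w + 1) → ZMod 2) (v : Fin (k - 1) → ZMod 2) :
    restrictedWalsh (fun x (i : Fin (k - 1)) => a i.val x) (a (k - 1)) u v = 0 ∨
      restrictedWalsh (fun x (i : Fin (k - 1)) => a i.val x) (a (k - 1)) u v = 2 ^ w ∨
      restrictedWalsh (fun x (i : Fin (k - 1)) => a i.val x) (a (k - 1)) u v = -2 ^ w := by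
  set T := restrictedWalsh (fun x (i : Fin (k - 1)) => a i.val x) (a (k - 1)) u
  set ζ := Complex.exp (2 * Real.pi * Complex.I / ((2 ^ k : ℕ) : ℂ))
  have hζ : IsPrimitiveRoot ζ (2 * 2 ^ (k - 1)) := by
    rw [← pow_succ', Nat.sub_add_cancel (by omega)]
    exact Complex.isPrimitiveRoot_exp _ (by positivity)
  have hsum : gwht f u = ∑ i, (T ((binaryIndex (k - 1)).symm i) : ℂ) * ζ ^ (i : ℕ) := by
    rw [gwht_eq_sum_restrictedWalsh (by omega) hf, ← (binaryIndex (k - 1)).symm.sum_comp]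
    simp only [Equiv.apply_symm_apply, T]
    rfl
  have hsq : ‖gwht f u‖ ^ 2 = 2 ^ (2 * w + 1) := by
    rw [hgb u, ← Real.rpow_natCast _ 2, ← Real.rpow_mul zero_le_two,
      ← Real.rpow_natCast (2 : ℝ) (2 * w + 1)]
    push_cast
    ring_nf
  simpa using coeff_eq_zero_or_of_norm_sq_eq_two_pow_odd (k - 2) (by congr 1; omega) hζ
    (fun i => T ((binaryIndex (k - 1)).symm i)) (hsum ▸ hsq) (binaryIndex (k - 1) v)

/-- Proposition 8: the generalized Gray map of a gbent function in `𝒢ℬ_n^{2^k}`, `n` odd,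
is `(k-2)`-plateaued: `W_{ψ(f)} ∈ {0, ±2^{(n+1)/2 + k - 2}}`. -/
theorem gray_map_of_gbent_odd_plateaued (n k : ℕ) (hn : Odd n) (hk : 3 ≤ k) (a : ℕ → BF n)
    (f : (Fin n → ZMod 2) → ZMod (2 ^ k)) (hf : coordExpand k a f) (hgb : IsGbent f) :
    ∀ (u : Fin n → ZMod 2) (y : Fin (k - 1) → ZMod 2),
      walshP (fun x y => (∑ i : Fin (k - 1), a i.val x * y i) + a (k - 1) x) u y = 0 ∨
        walshP (fun x y => (∑ i : Fin (k - 1), a i.val x * y i) + a (k - 1) x) u y =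
          2 ^ ((n + 1) / 2 + k - 2) ∨
        walshP (fun x y => (∑ i : Fin (k - 1), a i.val x * y i) + a (k - 1) x) u y =
          -2 ^ ((n + 1) / 2 + k - 2) := by
  intro u y
  obtain ⟨w, rfl⟩ := hn
  rw [walshP_eq_two_pow_mul_restrictedWalsh (fun x (i : Fin (k - 1)) => a i.val x) (a (k - 1)),
    show (2 * w + 1 + 1) / 2 + k - 2 = (k - 1) + w by omega, pow_add]
  rcases restrictedWalsh_eq_zero_or_of_isGbent (by omega) hf hgb u y with h | h | h <;> simp [h]
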